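/- If ξ ∈ Φ then g(ξ) ∈ Φ; that is, Φ is forward invariant under the renormalisation operator g. -/
import Mathlib


noncomputable section

/-- The parameter region `Φ`: `τ_L > δ_L + 1`, `δ_L > 0`, `τ_R < -(δ_R + 1)`, `δ_R > 0`. -/
def PhiSet : Set (ℝ × ℝ × ℝ × ℝ) :=
  {ξ | ξ.1 > ξ.2.1 + 1 ∧ 0 < ξ.2.1 ∧ ξ.2.2.1 < -(ξ.2.2.2 + 1) ∧ 0 < ξ.2.2.2}

/-- The renormalisation operator `g`. -/
def gmap (ξ : ℝ × ℝ × ℝ × ℝ) : ℝ × ℝ × ℝ × ℝ :=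
  (ξ.2.2.1 ^ 2 - 2 * ξ.2.2.2, ξ.2.2.2 ^ 2, ξ.1 * ξ.2.2.1 - ξ.2.1 - ξ.2.2.2, ξ.2.1 * ξ.2.2.2)

/-- Proposition 6.1: `Φ` is forward invariant under `g`. -/
theorem Phi_forward_invariant (ξ : ℝ × ℝ × ℝ × ℝ) (hξ : ξ ∈ PhiSet) :
    gmap ξ ∈ PhiSet := by
  obtain ⟨a,b,c,d⟩ := ξ
  obtain ⟨h1, h2, h3, h4⟩ := hξ
  refine ⟨?_, ?_, ?_, ?_⟩ <;> simp only [gmap, PhiSet, Set.mem_setOf_eq] at * <;> nlinarith [sq_nonneg (c+d+1), mul_pos h2 h4]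

end
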